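/- Suppose S has real entries, Ω₋ and Ω₊ are purely imaginary, and C₋ and C₊ are purely imaginary. Then for every s ∈ ℂ with sI_{2n} − A invertible, the transfer matrix is block diagonal: G_qp[s] = 0 and G_pq[s] = 0, i.e., quantum BAE measurements of q_out with respect to p_in and of p_out with respect to q_in are realized. -/
import Mathlib


open Matrix

noncomputable section

namespace LQS

/-- Entrywise real part, as a complex matrix. -/
def matRe {k l : ℕ} (X : Matrix (Fin k) (Fin l) ℂ) : Matrix (Fin k) (Fin l) ℂ :=
  fun i j => ((X i j).re : ℂ)

/-- Entrywise imaginary part, as a complex matrix. -/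
def matIm {k l : ℕ} (X : Matrix (Fin k) (Fin l) ℂ) : Matrix (Fin k) (Fin l) ℂ :=
  fun i j => ((X i j).im : ℂ)

/-- A complex matrix has real entries. -/
def isReal {k l : ℕ} (X : Matrix (Fin k) (Fin l) ℂ) : Prop := ∀ i j, (X i j).im = 0

/-- A complex matrix is purely imaginary (every entry has zero real part). -/
def isPurelyImag {k l : ℕ} (X : Matrix (Fin k) (Fin l) ℂ) : Prop := ∀ i j, (X i j).re = 0

/-- The symplectic matrix J_k = [[0, I],[−I, 0]]. -/
def Jmat (k : ℕ) : Matrix (Fin k ⊕ Fin k) (Fin k ⊕ Fin k) ℂ :=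
  fromBlocks 0 1 (-1) 0

/-- D = [[Re S, −Im S],[Im S, Re S]]. -/
def quadD {m : ℕ} (S : Matrix (Fin m) (Fin m) ℂ) :
    Matrix (Fin m ⊕ Fin m) (Fin m ⊕ Fin m) ℂ :=
  fromBlocks (matRe S) (-(matIm S)) (matIm S) (matRe S)

/-- C = [[Re(C₋+C₊), −Im(C₋−C₊)],[Im(C₋+C₊), Re(C₋−C₊)]]. -/
def quadC {m n : ℕ} (Cm Cp : Matrix (Fin m) (Fin n) ℂ) :
    Matrix (Fin m ⊕ Fin m) (Fin n ⊕ Fin n) ℂ :=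
  fromBlocks (matRe (Cm + Cp)) (-(matIm (Cm - Cp))) (matIm (Cm + Cp)) (matRe (Cm - Cp))

/-- B = −[[Re((C₋−C₊)†), −Im((C₋−C₊)†)],[Im((C₋+C₊)†), Re((C₋+C₊)†)]]·D. -/
def quadB {m n : ℕ} (S : Matrix (Fin m) (Fin m) ℂ) (Cm Cp : Matrix (Fin m) (Fin n) ℂ) :
    Matrix (Fin n ⊕ Fin n) (Fin m ⊕ Fin m) ℂ :=
  -(fromBlocks (matRe (Cm - Cp)ᴴ) (-(matIm (Cm - Cp)ᴴ))
      (matIm (Cm + Cp)ᴴ) (matRe (Cm + Cp)ᴴ)) * quadD S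

/-- JH = [[Im(Ω₋+Ω₊), Re(Ω₋−Ω₊)],[−Re(Ω₋+Ω₊), Im(Ω₋−Ω₊)]]. -/
def quadJH {n : ℕ} (Om Op : Matrix (Fin n) (Fin n) ℂ) :
    Matrix (Fin n ⊕ Fin n) (Fin n ⊕ Fin n) ℂ :=
  fromBlocks (matIm (Om + Op)) (matRe (Om - Op)) (-(matRe (Om + Op))) (matIm (Om - Op))

/-- C♯ = −J_n·Cᵀ·J_m. -/
def quadCsharp {m n : ℕ} (Cm Cp : Matrix (Fin m) (Fin n) ℂ) :
    Matrix (Fin n ⊕ Fin n) (Fin m ⊕ Fin m) ℂ :=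
  -(Jmat n) * (quadC Cm Cp)ᵀ * (Jmat m)

/-- A = JH − (1/2)·C♯·C. -/
def quadA {m n : ℕ} (Cm Cp : Matrix (Fin m) (Fin n) ℂ) (Om Op : Matrix (Fin n) (Fin n) ℂ) :
    Matrix (Fin n ⊕ Fin n) (Fin n ⊕ Fin n) ℂ :=
  quadJH Om Op - (1/2 : ℂ) • (quadCsharp Cm Cp * quadC Cm Cp)

/-- Transfer matrix G[s] = D + C(sI − A)⁻¹B. -/
def transferG {m n : ℕ} (S : Matrix (Fin m) (Fin m) ℂ) (Cm Cp : Matrix (Fin m) (Fin n) ℂ)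
    (Om Op : Matrix (Fin n) (Fin n) ℂ) (s : ℂ) :
    Matrix (Fin m ⊕ Fin m) (Fin m ⊕ Fin m) ℂ :=
  quadD S + quadC Cm Cp *
    (s • (1 : Matrix (Fin n ⊕ Fin n) (Fin n ⊕ Fin n) ℂ) - quadA Cm Cp Om Op)⁻¹ *
    quadB S Cm Cp

end LQS

open LQS Matrix

namespace LQSAux

/-- The sign matrix K = diag(I, −I). -/
def Kmat (k : ℕ) : Matrix (Fin k ⊕ Fin k) (Fin k ⊕ Fin k) ℂ :=
  fromBlocks 1 0 0 (-1)

lemma K_mul_K (k : ℕ) : Kmat k * Kmat k = 1 := by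
  simp [Kmat, fromBlocks_multiply, ← fromBlocks_one]

lemma K_cancel {k : ℕ} {α : Type*} [Fintype α] (X : Matrix (Fin k ⊕ Fin k) α ℂ) :
    Kmat k * (Kmat k * X) = X := by
  rw [← Matrix.mul_assoc, K_mul_K, Matrix.one_mul]

lemma K_conj_fromBlocks {k l : ℕ} (a b c d : Matrix (Fin k) (Fin l) ℂ) :
    Kmat k * fromBlocks a b c d * Kmat l = fromBlocks a (-b) (-c) d := by
  simp [Kmat, fromBlocks_multiply]

lemma K_conj {k l : ℕ} (X : Matrix (Fin k ⊕ Fin k) (Fin l ⊕ Fin l) ℂ) :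
    Kmat k * X * Kmat l =
      fromBlocks X.toBlocks₁₁ (-(X.toBlocks₁₂)) (-(X.toBlocks₂₁)) X.toBlocks₂₂ := by
  conv_lhs => rw [← fromBlocks_toBlocks X]
  rw [K_conj_fromBlocks]

lemma K_inv (k : ℕ) : (Kmat k)⁻¹ = Kmat k :=
  inv_eq_right_inv (K_mul_K k)

lemma K_transpose (k : ℕ) : (Kmat k)ᵀ = Kmat k := by
  simp [Kmat, fromBlocks_transpose]

end LQSAux

open LQSAux

theorem stmt_1 {m n : ℕ} (hm : 1 ≤ m) (hn : 1 ≤ n)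
    (S : Matrix (Fin m) (Fin m) ℂ) (Cm Cp : Matrix (Fin m) (Fin n) ℂ)
    (Om Op : Matrix (Fin n) (Fin n) ℂ)
    (hS : S ∈ Matrix.unitaryGroup (Fin m) ℂ)
    (hOmH : Omᴴ = Om) (hOpS : Opᵀ = Op)
    (hSre : isReal S) (hCmim : isPurelyImag Cm) (hCpim : isPurelyImag Cp)
    (hOmim : isPurelyImag Om) (hOpim : isPurelyImag Op) :
    ∀ s : ℂ,
      IsUnit (s • (1 : Matrix (Fin n ⊕ Fin n) (Fin n ⊕ Fin n) ℂ) - quadA Cm Cp Om Op) →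
      (transferG S Cm Cp Om Op s).toBlocks₁₂ = 0 ∧
      (transferG S Cm Cp Om Op s).toBlocks₂₁ = 0 := by
  intro s _hu
  -- entrywise facts
  have hImS : matIm S = 0 := by
    funext i j; simp [matIm, hSre i j]
  have hReSum : matRe (Cm + Cp) = 0 := by
    funext i j; simp [matRe, Matrix.add_apply, hCmim i j, hCpim i j]
  have hReDiff : matRe (Cm - Cp) = 0 := by
    funext i j; simp [matRe, Matrix.sub_apply, hCmim i j, hCpim i j]
  have hReSumH : matRe (Cm + Cp)ᴴ = 0 := by
    funext i j
    simp [matRe, Matrix.conjTranspose_apply, Matrix.add_apply, hCmim j i, hCpim j i]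
  have hReDiffH : matRe (Cm - Cp)ᴴ = 0 := by
    funext i j
    simp [matRe, Matrix.conjTranspose_apply, Matrix.sub_apply, hCmim j i, hCpim j i]
  have hReOsum : matRe (Om + Op) = 0 := by
    funext i j; simp [matRe, Matrix.add_apply, hOmim i j, hOpim i j]
  have hReOdiff : matRe (Om - Op) = 0 := by
    funext i j; simp [matRe, Matrix.sub_apply, hOmim i j, hOpim i j]
  -- K-conjugation identities
  have hD : Kmat m * quadD S * Kmat m = quadD S := by
    rw [quadD, hImS, K_conj_fromBlocks]; simp
  have hC : Kmat m * quadC Cm Cp * Kmat n = -(quadC Cm Cp) := by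
    rw [quadC, hReSum, hReDiff, K_conj_fromBlocks]
    simp [Matrix.fromBlocks_neg]
  have hF : Kmat n * (fromBlocks (matRe (Cm - Cp)ᴴ) (-(matIm (Cm - Cp)ᴴ))
      (matIm (Cm + Cp)ᴴ) (matRe (Cm + Cp)ᴴ)) * Kmat m
      = -(fromBlocks (matRe (Cm - Cp)ᴴ) (-(matIm (Cm - Cp)ᴴ))
      (matIm (Cm + Cp)ᴴ) (matRe (Cm + Cp)ᴴ)) := by
    rw [hReSumH, hReDiffH, K_conj_fromBlocks]
    simp [Matrix.fromBlocks_neg]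
  have hB : Kmat n * quadB S Cm Cp * Kmat m = -(quadB S Cm Cp) := by
    rw [quadB]
    calc Kmat n * (-(fromBlocks (matRe (Cm - Cp)ᴴ) (-(matIm (Cm - Cp)ᴴ))
          (matIm (Cm + Cp)ᴴ) (matRe (Cm + Cp)ᴴ)) * quadD S) * Kmat m
        = -((Kmat n * fromBlocks (matRe (Cm - Cp)ᴴ) (-(matIm (Cm - Cp)ᴴ))
          (matIm (Cm + Cp)ᴴ) (matRe (Cm + Cp)ᴴ) * Kmat m) * (Kmat m * quadD S * Kmat m)) := by
          simp only [Matrix.neg_mul, Matrix.mul_neg, Matrix.mul_assoc, K_cancel]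
      _ = -(-(fromBlocks (matRe (Cm - Cp)ᴴ) (-(matIm (Cm - Cp)ᴴ))
          (matIm (Cm + Cp)ᴴ) (matRe (Cm + Cp)ᴴ)) * quadD S) := by rw [hF, hD]
  have hJH : Kmat n * quadJH Om Op * Kmat n = quadJH Om Op := by
    rw [quadJH, hReOsum, hReOdiff, K_conj_fromBlocks]; simp
  have hJ : ∀ k, Kmat k * Jmat k * Kmat k = -(Jmat k) := by
    intro k
    rw [Jmat, K_conj_fromBlocks]
    simp [Matrix.fromBlocks_neg]
  have hCt : Kmat n * (quadC Cm Cp)ᵀ * Kmat m = -((quadC Cm Cp)ᵀ) := by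
    have := congrArg Matrix.transpose hC
    rw [Matrix.transpose_mul, Matrix.transpose_mul, K_transpose, K_transpose,
      Matrix.transpose_neg] at this
    rw [← Matrix.mul_assoc] at this
    exact this
  have hCsC : Kmat n * (quadCsharp Cm Cp * quadC Cm Cp) * Kmat n
      = quadCsharp Cm Cp * quadC Cm Cp := by
    rw [quadCsharp]
    calc Kmat n * (-(Jmat n) * (quadC Cm Cp)ᵀ * Jmat m * quadC Cm Cp) * Kmat n
        = -((Kmat n * Jmat n * Kmat n) * (Kmat n * (quadC Cm Cp)ᵀ * Kmat m)
            * (Kmat m * Jmat m * Kmat m) * (Kmat m * quadC Cm Cp * Kmat n)) := by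
          simp only [Matrix.neg_mul, Matrix.mul_neg, Matrix.mul_assoc, K_cancel]
      _ = -((-(Jmat n)) * (-((quadC Cm Cp)ᵀ)) * (-(Jmat m)) * (-(quadC Cm Cp))) := by
          rw [hJ n, hJ m, hCt, hC]
      _ = -(Jmat n) * (quadC Cm Cp)ᵀ * Jmat m * quadC Cm Cp := by
          simp only [Matrix.neg_mul, Matrix.mul_neg, neg_neg]
  have hA : Kmat n * quadA Cm Cp Om Op * Kmat n = quadA Cm Cp Om Op := by
    rw [quadA, Matrix.mul_sub, Matrix.sub_mul, hJH, Matrix.mul_smul, Matrix.smul_mul, hCsC]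
  set M : Matrix (Fin n ⊕ Fin n) (Fin n ⊕ Fin n) ℂ :=
    s • (1 : Matrix (Fin n ⊕ Fin n) (Fin n ⊕ Fin n) ℂ) - quadA Cm Cp Om Op with hMdef
  have hM : Kmat n * M * Kmat n = M := by
    rw [hMdef, Matrix.mul_sub, Matrix.sub_mul, hA, Matrix.mul_smul, Matrix.smul_mul,
      Matrix.mul_one, K_mul_K]
  have hMinv : Kmat n * M⁻¹ * Kmat n = M⁻¹ := by
    have h1 : (Kmat n * M * Kmat n)⁻¹ = Kmat n * M⁻¹ * Kmat n := by
      rw [Matrix.mul_inv_rev, Matrix.mul_inv_rev, K_inv, Matrix.mul_assoc]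
    rw [← h1, hM]
  have hG : Kmat m * transferG S Cm Cp Om Op s * Kmat m = transferG S Cm Cp Om Op s := by
    rw [transferG, ← hMdef, Matrix.mul_add, Matrix.add_mul, hD]
    congr 1
    calc Kmat m * (quadC Cm Cp * M⁻¹ * quadB S Cm Cp) * Kmat m
        = (Kmat m * quadC Cm Cp * Kmat n) * (Kmat n * M⁻¹ * Kmat n)
            * (Kmat n * quadB S Cm Cp * Kmat m) := by
          simp only [Matrix.mul_assoc, K_cancel]
      _ = (-(quadC Cm Cp)) * M⁻¹ * (-(quadB S Cm Cp)) := by rw [hC, hMinv, hB]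
      _ = quadC Cm Cp * M⁻¹ * quadB S Cm Cp := by
          simp only [Matrix.neg_mul, Matrix.mul_neg, neg_neg]
  -- conclude
  rw [K_conj] at hG
  set G := transferG S Cm Cp Om Op s with hGdef
  have h12 : -(G.toBlocks₁₂) = G.toBlocks₁₂ := by
    conv_rhs => rw [← hG]
    simp [Matrix.toBlocks_fromBlocks₁₂]
  have h21 : -(G.toBlocks₂₁) = G.toBlocks₂₁ := by
    conv_rhs => rw [← hG]
    simp [Matrix.toBlocks_fromBlocks₂₁]
  constructor
  · funext i j
    have h1 := congrFun (congrFun h12 i) j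
    simp only [Matrix.neg_apply, Matrix.zero_apply] at h1 ⊢
    linear_combination (-1/2 : ℂ) * h1
  · funext i j
    have h1 := congrFun (congrFun h21 i) j
    simp only [Matrix.neg_apply, Matrix.zero_apply] at h1 ⊢
    linear_combination (-1/2 : ℂ) * h1
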